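/- arXiv:0810.4101 — 2 statements merged into one kernel-verified Lean document; each statement's English description precedes it below -/
import Mathlib

section
/- For μ > 0, γ ∈ ℝ, 0 < α < π/2, and 0 < δ < π/2 − α, every point of the curve T(x) = μ(1 − sin(α + ix)) + γ, x ∈ ℝ, lies in the sector {z ∈ ℂ : |arg(z − γ)| < π − δ}. -/
/-!
Writing `s = sin α`, `c = cos α`, the point `z = 1 - sin (α + x i)` has real part `1 - s cosh x`
and imaginary part `-c sinh x`, so `‖z‖² = (cosh x - s)²` because `s² + c² = 1` and
`cosh² x - sinh² x = 1`. Hence `re z + s ‖z‖ = 1 - s² ≥ 0`, i.e. `cos (arg z) ≥ -s = cos (π/2 + α)`,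
which gives `|arg z| ≤ π/2 + α < π - δ`.
-/

open Real

namespace Complex

theorem abs_arg_le_of_cos_mul_norm_le_re {z : ℂ} {θ : ℝ} (hθ0 : 0 ≤ θ) (hθπ : θ ≤ π)
    (h : Real.cos θ * ‖z‖ ≤ z.re) : |arg z| ≤ θ := by
  rcases eq_or_ne z 0 with rfl | hz
  · simpa using hθ0
  have hcos : Real.cos θ ≤ Real.cos |arg z| := by
    rw [Real.cos_abs, cos_arg hz, le_div_iff₀ (norm_pos_iff.mpr hz)]
    exact h
  exact (strictAntiOn_cos.le_iff_ge ⟨hθ0, hθπ⟩ ⟨abs_nonneg _, abs_arg_le_pi z⟩).1 hcos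

theorem re_one_sub_sin_add_mul_I (α x : ℝ) :
    (1 - sin (α + x * I)).re = 1 - Real.sin α * Real.cosh x := by
  simp [sin_add_mul_I, ← ofReal_sin, ← ofReal_cos, ← ofReal_cosh, ← ofReal_sinh]

theorem im_one_sub_sin_add_mul_I (α x : ℝ) :
    (1 - sin (α + x * I)).im = -(Real.cos α * Real.sinh x) := by
  simp [sin_add_mul_I, ← ofReal_sin, ← ofReal_cos, ← ofReal_cosh, ← ofReal_sinh]

theorem norm_one_sub_sin_add_mul_I (α x : ℝ) :
    ‖1 - sin (α + x * I)‖ = Real.cosh x - Real.sin α := by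
  have hnonneg : 0 ≤ Real.cosh x - Real.sin α := by
    linarith [Real.one_le_cosh x, Real.sin_le_one α]
  rw [← abs_of_nonneg hnonneg, ← Real.sqrt_sq_eq_abs, norm_def, normSq_apply,
    re_one_sub_sin_add_mul_I, im_one_sub_sin_add_mul_I]
  congr 1
  linear_combination (Real.cosh x ^ 2 - 1) * Real.sin_sq_add_cos_sq α
    - Real.cos α ^ 2 * Real.cosh_sq_sub_sinh_sq x

theorem abs_arg_one_sub_sin_add_mul_I_le {α : ℝ} (hα0 : -(π / 2) ≤ α) (hα : α ≤ π / 2) (x : ℝ) :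
    |arg (1 - sin (α + x * I))| ≤ π / 2 + α := by
  apply abs_arg_le_of_cos_mul_norm_le_re (by linarith) (by linarith)
  rw [add_comm (π / 2), Real.cos_add_pi_div_two, norm_one_sub_sin_add_mul_I,
    re_one_sub_sin_add_mul_I]
  nlinarith [Real.sin_sq_add_cos_sq α, sq_nonneg (Real.cos α)]

end Complex

theorem stmt_12_general (μ γ α δ : ℝ) (hμ : 0 < μ) (hα0 : 0 < α) (hα : α < π / 2)
    (hδ : δ < π / 2 - α)
    (T : ℝ → ℂ) (hT : ∀ x : ℝ, T x = (μ:ℂ) * (1 - Complex.sin ((α:ℂ) + x * Complex.I)) + γ) :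
    ∀ x : ℝ, |(T x - (γ:ℂ)).arg| < π - δ := by
  intro x
  have harg : (T x - γ).arg = (1 - Complex.sin (α + x * Complex.I)).arg := by
    rw [hT, add_sub_cancel_right, Complex.arg_real_mul _ hμ]
  rw [harg]
  have := Complex.abs_arg_one_sub_sin_add_mul_I_le (by linarith [pi_pos]) hα.le x
  linarith

theorem stmt_12 (μ γ α δ : ℝ) (hμ : 0 < μ) (hα0 : 0 < α) (hα : α < π / 2)
    (hδ0 : 0 < δ) (hδ : δ < π / 2 - α)
    (T : ℝ → ℂ) (hT : ∀ x : ℝ, T x = (μ:ℂ) * (1 - Complex.sin ((α:ℂ) + x * Complex.I)) + γ) :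
    ∀ x : ℝ, |(T x - (γ:ℂ)).arg| < π - δ :=
  stmt_12_general μ γ α δ hμ hα0 hα hδ T hT
end

section
/- For t > 0, γ ∈ ℝ, ν ≥ 1, M > 0, and a function F analytic on the sector |arg(z − γ)| < π − δ (0 < δ < π/2) with ‖F(z)‖ ≤ M/|z−γ|^ν there, the integral (1/(2πi)) ∫_Γ e^{tz} F(z) dz over the hyperbola Γ parameterized by T(x) = μ(1 − sin(α+ix)) + γ (with μ > 0 and 0 < α < π/2 − δ) converges absolutely; i.e., ∫_ℝ ‖e^{t T(x)} F(T(x)) T'(x)‖ dx < ∞. -/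
open Real MeasureTheory

/-! On the hyperbola, `T x - γ = μ (1 - sin (α + x i))` has real part `μ (1 - sin α cosh x)` and
modulus `μ (cosh x - sin α) ≥ μ (1 - sin α) > 0`. Since `re > -sin α · modulus`, the curve lies
inside the sector `|arg| < α + π / 2` of its asymptotes, hence inside the sector where `F` is
continuous and bounded by `M / (μ (1 - sin α)) ^ ν`. As `‖T'‖ ≤ μ cosh x` and
`‖exp (t T x)‖ = exp (t (μ + γ)) exp (-t μ sin α cosh x)`, the integrand is dominated by a multiple
of `cosh x · exp (-a cosh x)`, which a Gaussian dominates in turn. -/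

theorem Complex.abs_arg_lt_of_cos_mul_norm_lt_re {w : ℂ} {θ : ℝ} (hθ : 0 ≤ θ)
    (h : Real.cos θ * ‖w‖ < w.re) : |w.arg| < θ := by
  have hw : w ≠ 0 := by rintro rfl; simp at h
  by_contra! hle
  have hcos : Real.cos |w.arg| ≤ Real.cos θ :=
    Real.cos_le_cos_of_nonneg_of_le_pi hθ
      (abs_le.2 ⟨by linarith [w.neg_pi_lt_arg], w.arg_le_pi⟩) hle
  rw [Real.cos_abs, Complex.cos_arg hw, div_le_iff₀ (norm_pos_iff.2 hw)] at hcos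
  linarith

theorem Real.one_add_sq_div_two_le_cosh (x : ℝ) : 1 + x ^ 2 / 2 ≤ Real.cosh x := by
  have hsinh : (x / 2) ^ 2 ≤ Real.sinh (x / 2) ^ 2 := by
    rw [← sq_abs, ← sq_abs (Real.sinh _), Real.abs_sinh]
    gcongr
    exact Real.self_le_sinh_iff.2 (abs_nonneg _)
  have hcosh := Real.cosh_two_mul (x / 2)
  rw [mul_div_cancel₀ x two_ne_zero, Real.cosh_sq] at hcosh
  nlinarith

theorem Real.mul_exp_neg_mul_le {a : ℝ} (ha : 0 < a) (u : ℝ) :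
    u * Real.exp (-(a * u)) ≤ 2 / a * Real.exp (-(a / 2 * u)) := by
  have hsplit : Real.exp (-(a * u)) = Real.exp (-(a / 2 * u)) * Real.exp (-(a / 2 * u)) := by
    rw [← Real.exp_add]; ring_nf
  have hu : u ≤ 2 / a * Real.exp (a / 2 * u) := by
    rw [div_mul_eq_mul_div, le_div_iff₀ ha]
    linarith [Real.add_one_le_exp (a / 2 * u)]
  calc u * Real.exp (-(a * u))
      ≤ 2 / a * Real.exp (a / 2 * u) * Real.exp (-(a / 2 * u)) * Real.exp (-(a / 2 * u)) := by
        rw [hsplit, ← mul_assoc]; gcongr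
    _ = 2 / a * Real.exp (-(a / 2 * u)) := by
        rw [mul_assoc (2 / a), ← Real.exp_add, add_neg_cancel, Real.exp_zero, mul_one]

theorem integrable_cosh_mul_exp_neg_mul_cosh {a : ℝ} (ha : 0 < a) :
    Integrable fun x : ℝ => Real.cosh x * Real.exp (-(a * Real.cosh x)) := by
  refine ((integrable_exp_neg_mul_sq (by positivity : 0 < a / 4)).const_mul (2 / a)).mono'
    (by fun_prop) (ae_of_all _ fun x => ?_)
  rw [Real.norm_of_nonneg (by positivity)]
  refine (Real.mul_exp_neg_mul_le ha _).trans ?_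
  gcongr
  nlinarith [Real.one_add_sq_div_two_le_cosh x]

theorem Complex.norm_cos_le_cosh_im (z : ℂ) : ‖Complex.cos z‖ ≤ Real.cosh z.im := by
  rw [Complex.cos, norm_div, Complex.norm_two, Real.cosh_eq]
  gcongr
  refine (norm_add_le _ _).trans_eq ?_
  simp [Complex.norm_exp, add_comm]

section Hyperbola

variable (α x : ℝ)

theorem Complex.re_one_sub_sin_add_mul_I_s18 :
    (1 - Complex.sin (α + x * Complex.I)).re = 1 - Real.sin α * Real.cosh x := by
  simp [Complex.sin_add_mul_I, Complex.sin_ofReal_re, Complex.cosh_ofReal_re]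

theorem Complex.im_one_sub_sin_add_mul_I_s18 :
    (1 - Complex.sin (α + x * Complex.I)).im = -(Real.cos α * Real.sinh x) := by
  simp [Complex.sin_add_mul_I, Complex.cos_ofReal_re, Complex.sinh_ofReal_re]

theorem Complex.norm_one_sub_sin_add_mul_I_s18 :
    ‖1 - Complex.sin (α + x * Complex.I)‖ = Real.cosh x - Real.sin α := by
  have hnonneg : 0 ≤ Real.cosh x - Real.sin α := by
    linarith [Real.one_le_cosh x, Real.sin_le_one α]
  rw [Complex.norm_def, Real.sqrt_eq_iff_eq_sq (Complex.normSq_nonneg _) hnonneg,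
    Complex.normSq_apply, Complex.re_one_sub_sin_add_mul_I_s18, Complex.im_one_sub_sin_add_mul_I_s18]
  linear_combination (Real.sin α ^ 2 - 1) * Real.cosh_sq_sub_sinh_sq x +
    Real.sinh x ^ 2 * Real.sin_sq_add_cos_sq α

theorem Complex.abs_arg_one_sub_sin_add_mul_I_lt (hα : α ∈ Set.Ioo (-(π / 2)) (π / 2)) :
    |(1 - Complex.sin (α + x * Complex.I)).arg| < α + π / 2 := by
  have hcos := Real.cos_pos_of_mem_Ioo hα
  refine Complex.abs_arg_lt_of_cos_mul_norm_lt_re (by linarith [hα.1]) ?_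
  rw [Real.cos_add_pi_div_two, Complex.norm_one_sub_sin_add_mul_I_s18,
    Complex.re_one_sub_sin_add_mul_I_s18]
  nlinarith [Real.sin_sq_add_cos_sq α]

end Hyperbola

theorem integrable_exp_mul_hyperbola_mul_cos {t μ γ α : ℝ} (h : 0 < t * μ * Real.sin α) :
    Integrable fun x : ℝ => Complex.exp (t * (μ * (1 - Complex.sin (α + x * Complex.I)) + γ)) *
      (-Complex.I * μ * Complex.cos (α + x * Complex.I)) := by
  refine ((integrable_cosh_mul_exp_neg_mul_cosh h).const_mul
    (Real.exp (t * (μ + γ)) * |μ|)).mono' (by fun_prop) (ae_of_all _ fun x => ?_)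
  have hre : (t * (μ * (1 - Complex.sin (α + x * Complex.I)) + γ) : ℂ).re =
      t * (μ + γ) + -(t * μ * Real.sin α * Real.cosh x) := by
    simp only [Complex.re_ofReal_mul, Complex.add_re, Complex.ofReal_re,
      Complex.re_one_sub_sin_add_mul_I_s18]
    ring
  rw [norm_mul, Complex.norm_exp, hre, Real.exp_add, norm_mul, norm_mul, norm_neg, Complex.norm_I,
    one_mul, Complex.norm_real, Real.norm_eq_abs]
  have hcos : ‖Complex.cos (α + x * Complex.I)‖ ≤ Real.cosh x := by
    simpa using Complex.norm_cos_le_cosh_im (α + x * Complex.I)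
  calc _ ≤ Real.exp (t * (μ + γ)) * Real.exp (-(t * μ * Real.sin α * Real.cosh x)) *
        (|μ| * Real.cosh x) := by gcongr
    _ = _ := by ring

theorem stmt_18_general {X : Type*} [NormedAddCommGroup X] [NormedSpace ℂ X]
    (t γ ν M δ μ α : ℝ) (ht : 0 < t) (hν : 1 ≤ ν) (hM : 0 < M)
    (hδ0 : 0 < δ) (hμ : 0 < μ) (hα0 : 0 < α) (hα : α < π / 2 - δ)
    (F : ℂ → X)
    (hF : AnalyticOn ℂ F {z : ℂ | z ≠ (γ:ℂ) ∧ |(z - (γ:ℂ)).arg| < π - δ})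
    (hFbound : ∀ z : ℂ, z ≠ (γ:ℂ) → |(z - (γ:ℂ)).arg| < π - δ →
      ‖F z‖ ≤ M / ‖z - (γ:ℂ)‖ ^ ν)
    (T T' : ℝ → ℂ)
    (hT : ∀ x : ℝ, T x = (μ:ℂ) * (1 - Complex.sin ((α:ℂ) + x * Complex.I)) + γ)
    (hT' : ∀ x : ℝ, T' x = -Complex.I * μ * Complex.cos ((α:ℂ) + x * Complex.I)) :
    Integrable (fun x : ℝ => (Complex.exp ((t:ℂ) * T x) * T' x) • F (T x)) := by
  have hαI : α ∈ Set.Ioo (-(π / 2)) (π / 2) := ⟨by linarith, by linarith⟩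
  have hsin : 0 < Real.sin α := Real.sin_pos_of_pos_of_lt_pi hα0 (by linarith [Real.pi_pos])
  have hdist : 0 < μ * (1 - Real.sin α) :=
    mul_pos hμ (by nlinarith [Real.cos_pos_of_mem_Ioo hαI, Real.sin_sq_add_cos_sq α])
  have hsub : ∀ x : ℝ, T x - γ = μ * (1 - Complex.sin (α + x * Complex.I)) := fun x => by
    rw [hT]; ring
  have hnorm : ∀ x : ℝ, μ * (1 - Real.sin α) ≤ ‖T x - γ‖ := fun x => by
    rw [hsub, norm_mul, Complex.norm_real, Real.norm_of_nonneg hμ.le,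
      Complex.norm_one_sub_sin_add_mul_I_s18]
    gcongr
    exact Real.one_le_cosh x
  have hsector : ∀ x : ℝ, T x ≠ γ ∧ |(T x - γ).arg| < π - δ := fun x =>
    ⟨sub_ne_zero.1 (norm_pos_iff.1 (hdist.trans_le (hnorm x))), by
      rw [hsub, Complex.arg_real_mul _ hμ]
      linarith [Complex.abs_arg_one_sub_sin_add_mul_I_lt α x hαI]⟩
  have hFT : ∀ x : ℝ, ‖F (T x)‖ ≤ M / (μ * (1 - Real.sin α)) ^ ν := fun x =>
    (hFbound _ (hsector x).1 (hsector x).2).trans (by gcongr; exact hnorm x)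
  have hFc : Continuous fun x => F (T x) :=
    hF.continuousOn.comp_continuous (by rw [funext hT]; fun_prop) hsector
  have hφ : Integrable fun x : ℝ => Complex.exp (t * T x) * T' x := by
    simp_rw [hT, hT']
    exact integrable_exp_mul_hyperbola_mul_cos (by positivity)
  exact hφ.smul_bdd _ hFc.aestronglyMeasurable (ae_of_all _ hFT)

theorem stmt_18 {X : Type*} [NormedAddCommGroup X] [NormedSpace ℂ X] [CompleteSpace X]
    (t γ ν M δ μ α : ℝ) (ht : 0 < t) (hν : 1 ≤ ν) (hM : 0 < M)
    (hδ0 : 0 < δ) (hδ : δ < π / 2) (hμ : 0 < μ) (hα0 : 0 < α) (hα : α < π / 2 - δ)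
    (F : ℂ → X)
    (hF : AnalyticOn ℂ F {z : ℂ | z ≠ (γ:ℂ) ∧ |(z - (γ:ℂ)).arg| < π - δ})
    (hFbound : ∀ z : ℂ, z ≠ (γ:ℂ) → |(z - (γ:ℂ)).arg| < π - δ →
      ‖F z‖ ≤ M / ‖z - (γ:ℂ)‖ ^ ν)
    (T T' : ℝ → ℂ)
    (hT : ∀ x : ℝ, T x = (μ:ℂ) * (1 - Complex.sin ((α:ℂ) + x * Complex.I)) + γ)
    (hT' : ∀ x : ℝ, T' x = -Complex.I * μ * Complex.cos ((α:ℂ) + x * Complex.I)) :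
    Integrable (fun x : ℝ => (Complex.exp ((t:ℂ) * T x) * T' x) • F (T x)) :=
  stmt_18_general t γ ν M δ μ α ht hν hM hδ0 hμ hα0 hα F hF hFbound T T' hT hT'
end
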